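/- arXiv:math/0303388 — 3 statements merged into one kernel-verified Lean document; each statement's English description precedes it below -/
import Mathlib

section
/- Let (z,w) be an admissible pair (z(x) - w(p) ≥ (β² - |x-p|²)/(2β) for all x ∈ Ω, p ∈ T) and let P̃ : Ω → T be a measurable map such that z(x) - w(P̃(x)) = (β² - |x - P̃(x)|²)/(2β) for almost every x ∈ Ω, and such that ∫_Ω h(P̃(x)) I(x) dx = ∫_T h(p) L(p) dp for all continuous h on T. Then for every admissible pair (ζ,ω), F(ζ,ω) ≥ F(z,w), where F(ζ,ω) = ∫_Ω ζ I - ∫_T ω L. -/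
/-!
Since `P̃` transports `I` to `L`, both `T`-integrals can be written as `Ω`-integrals of the
composite with `P̃`. Along the graph of `P̃` the pair `(z, w)` saturates the cost constraint,
which `(ζ, ω)` satisfies, so `z - w ∘ P̃ ≤ ζ - ω ∘ P̃` a.e. on `Ω`; integrating against `I ≥ 0`
gives the inequality.
-/

open MeasureTheory Set

theorem ContinuousOn.exists_continuous_eqOn {Y : Type*} [TopologicalSpace Y] [NormalSpace Y]
    {s : Set Y} (hs : IsClosed s) {f : Y → ℝ} (hf : ContinuousOn f s) :
    ∃ g : Y → ℝ, Continuous g ∧ EqOn g f s := by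
  obtain ⟨g, hg⟩ := ContinuousMap.exists_restrict_eq hs ⟨s.domRestrict f, hf.domRestrict⟩
  exact ⟨g, g.continuous, fun x hx => congr($hg ⟨x, hx⟩)⟩

section Transport

variable {X Y : Type*} [MeasurableSpace X] {μ : Measure X}
  [TopologicalSpace Y] [NormalSpace Y] [MeasurableSpace Y] {ν : Measure Y}
  {Ω : Set X} {T : Set Y} {P : X → Y} {I : X → ℝ} {L : Y → ℝ} {ω : Y → ℝ}

theorem integrableOn_comp_mul_of_continuousOn [OpensMeasurableSpace Y] [T2Space Y]
    (hω : ContinuousOn ω T) (hT : IsCompact T) (hP : Measurable P) (hPT : MapsTo P Ω T)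
    (hΩ : MeasurableSet Ω) (hI : IntegrableOn I Ω μ) :
    IntegrableOn (fun x => ω (P x) * I x) Ω μ := by
  obtain ⟨ω', hω'c, hω'eq⟩ := hω.exists_continuous_eqOn hT.isClosed
  obtain ⟨C, hC⟩ := hT.exists_bound_of_continuousOn hω'c.continuousOn
  have hint : IntegrableOn (fun x => ω' (P x) * I x) Ω μ :=
    hI.bdd_mul (hω'c.measurable.comp hP).aestronglyMeasurable
      (ae_restrict_of_forall_mem hΩ fun x hx => hC _ (hPT hx))
  exact hint.congr_fun (fun x hx => by simp only [hω'eq (hPT hx)]) hΩ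

theorem setIntegral_comp_mul_eq_of_continuousOn
    (hplan : ∀ h : Y → ℝ, Continuous h → ∫ x in Ω, h (P x) * I x ∂μ = ∫ p in T, h p * L p ∂ν)
    (hω : ContinuousOn ω T) (hT : IsClosed T) (hPT : MapsTo P Ω T) (hΩ : MeasurableSet Ω)
    (hTm : MeasurableSet T) :
    ∫ x in Ω, ω (P x) * I x ∂μ = ∫ p in T, ω p * L p ∂ν := by
  obtain ⟨ω', hω'c, hω'eq⟩ := hω.exists_continuous_eqOn hT
  calc ∫ x in Ω, ω (P x) * I x ∂μ = ∫ x in Ω, ω' (P x) * I x ∂μ :=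
        setIntegral_congr_fun hΩ fun x hx => by simp only [hω'eq (hPT hx)]
    _ = ∫ p in T, ω' p * L p ∂ν := hplan ω' hω'c
    _ = ∫ p in T, ω p * L p ∂ν := setIntegral_congr_fun hTm fun p hp => by simp only [hω'eq hp]

end Transport

theorem stmt_13_general {n : ℕ} (Ω T : Set (EuclideanSpace ℝ (Fin n)))
    (hΩc : IsCompact Ω) (hTc : IsCompact T)
    (β : ℝ)
    (I L : EuclideanSpace ℝ (Fin n) → ℝ)
    (hI0 : ∀ x ∈ Ω, 0 ≤ I x)
    (hIint : IntegrableOn I Ω)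
    (z w : EuclideanSpace ℝ (Fin n) → ℝ)
    (hzc : ContinuousOn z Ω) (hwc : ContinuousOn w T)
    (Pt : EuclideanSpace ℝ (Fin n) → EuclideanSpace ℝ (Fin n))
    (hPtm : Measurable Pt) (hPtT : ∀ x ∈ Ω, Pt x ∈ T)
    (heq : ∀ᵐ x ∂(volume.restrict Ω),
      z x - w (Pt x) = (β ^ 2 - ‖x - Pt x‖ ^ 2) / (2 * β))
    (hplan : ∀ h : EuclideanSpace ℝ (Fin n) → ℝ, Continuous h →
      ∫ x in Ω, h (Pt x) * I x = ∫ p in T, h p * L p) :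
    ∀ ζ ω : EuclideanSpace ℝ (Fin n) → ℝ, ContinuousOn ζ Ω → ContinuousOn ω T →
      (∀ x ∈ Ω, ∀ p ∈ T, ζ x - ω p ≥ (β ^ 2 - ‖x - p‖ ^ 2) / (2 * β)) →
      ((∫ x in Ω, ζ x * I x) - ∫ p in T, ω p * L p) ≥
        ((∫ x in Ω, z x * I x) - ∫ p in T, w p * L p) := by
  intro ζ ω hζc hωc hadm
  have hΩm := hΩc.measurableSet
  have hPT : MapsTo Pt Ω T := fun x hx => hPtT x hx
  have iζ := hIint.continuousOn_mul hζc hΩc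
  have iz := hIint.continuousOn_mul hzc hΩc
  have iω := integrableOn_comp_mul_of_continuousOn hωc hTc hPtm hPT hΩm hIint
  have iw := integrableOn_comp_mul_of_continuousOn hwc hTc hPtm hPT hΩm hIint
  rw [← setIntegral_comp_mul_eq_of_continuousOn hplan hωc hTc.isClosed hPT hΩm hTc.measurableSet,
    ← setIntegral_comp_mul_eq_of_continuousOn hplan hwc hTc.isClosed hPT hΩm hTc.measurableSet,
    ge_iff_le, sub_le_sub_iff, ← integral_add iz iω, ← integral_add iζ iw]
  refine integral_mono_ae (iz.add iω) (iζ.add iw) ?_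
  filter_upwards [ae_restrict_mem hΩm, heq] with x hx hxeq
  have hgap : z x - w (Pt x) ≤ ζ x - ω (Pt x) := hxeq ▸ hadm x hx (Pt x) (hPtT x hx)
  nlinarith [mul_le_mul_of_nonneg_right hgap (hI0 x hx)]

theorem stmt_13 {n : ℕ} (Ω T : Set (EuclideanSpace ℝ (Fin n)))
    (hΩc : IsCompact Ω) (hΩne : Ω.Nonempty) (hTc : IsCompact T) (hTne : T.Nonempty)
    (β : ℝ) (hβ : 0 < β)
    (I L : EuclideanSpace ℝ (Fin n) → ℝ)
    (hI0 : ∀ x ∈ Ω, 0 ≤ I x) (hL0 : ∀ p ∈ T, 0 ≤ L p)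
    (hIint : IntegrableOn I Ω) (hLint : IntegrableOn L T)
    (hmass : ∫ x in Ω, I x = ∫ p in T, L p)
    (z w : EuclideanSpace ℝ (Fin n) → ℝ)
    (hzc : ContinuousOn z Ω) (hwc : ContinuousOn w T)
    (hadm : ∀ x ∈ Ω, ∀ p ∈ T, z x - w p ≥ (β ^ 2 - ‖x - p‖ ^ 2) / (2 * β))
    (Pt : EuclideanSpace ℝ (Fin n) → EuclideanSpace ℝ (Fin n))
    (hPtm : Measurable Pt) (hPtT : ∀ x ∈ Ω, Pt x ∈ T)
    (heq : ∀ᵐ x ∂(volume.restrict Ω),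
      z x - w (Pt x) = (β ^ 2 - ‖x - Pt x‖ ^ 2) / (2 * β))
    (hplan : ∀ h : EuclideanSpace ℝ (Fin n) → ℝ, Continuous h →
      ∫ x in Ω, h (Pt x) * I x = ∫ p in T, h p * L p) :
    ∀ ζ ω : EuclideanSpace ℝ (Fin n) → ℝ, ContinuousOn ζ Ω → ContinuousOn ω T →
      (∀ x ∈ Ω, ∀ p ∈ T, ζ x - ω p ≥ (β ^ 2 - ‖x - p‖ ^ 2) / (2 * β)) →
      ((∫ x in Ω, ζ x * I x) - ∫ p in T, ω p * L p) ≥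
        ((∫ x in Ω, z x * I x) - ∫ p in T, w p * L p) :=
  stmt_13_general Ω T hΩc hTc β I L hI0 hIint z w hzc hwc Pt hPtm hPtT heq hplan
end

section
/- Under the hypotheses of the previous statement, if P : Ω → T is another measure-preserving map achieving ∫_Ω |x - P(x)|² I dx = ∫_Ω |x - P̃(x)|² I dx, then P(x) = P̃(x) for almost every x in the set {x ∈ Ω : I(x) > 0}. -/
open MeasureTheory

theorem stmt_15 {n : ℕ} (Ω T : Set (EuclideanSpace ℝ (Fin n)))
    (hΩc : IsCompact Ω) (hΩne : Ω.Nonempty) (hTc : IsCompact T) (hTne : T.Nonempty)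
    (β : ℝ) (hβ : 0 < β)
    (I L : EuclideanSpace ℝ (Fin n) → ℝ)
    (hI0 : ∀ x ∈ Ω, 0 ≤ I x) (hL0 : ∀ p ∈ T, 0 ≤ L p)
    (hIint : IntegrableOn I Ω) (hLint : IntegrableOn L T)
    (hmass : ∫ x in Ω, I x = ∫ p in T, L p)
    (z w : EuclideanSpace ℝ (Fin n) → ℝ)
    (hzc : ContinuousOn z Ω) (hwc : ContinuousOn w T)
    (hadm : ∀ x ∈ Ω, ∀ p ∈ T, z x - w p ≥ (β ^ 2 - ‖x - p‖ ^ 2) / (2 * β))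
    (Pt : EuclideanSpace ℝ (Fin n) → EuclideanSpace ℝ (Fin n))
    (hPtm : Measurable Pt) (hPtT : ∀ x ∈ Ω, Pt x ∈ T)
    (heq : ∀ᵐ x ∂(volume.restrict Ω),
      z x - w (Pt x) = (β ^ 2 - ‖x - Pt x‖ ^ 2) / (2 * β))
    (huniq : ∀ᵐ x ∂(volume.restrict Ω), ∀ p ∈ T,
      z x - w p = (β ^ 2 - ‖x - p‖ ^ 2) / (2 * β) → p = Pt x)
    (hPtplan : ∀ h : EuclideanSpace ℝ (Fin n) → ℝ, Continuous h →
      ∫ x in Ω, h (Pt x) * I x = ∫ p in T, h p * L p)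
    (P : EuclideanSpace ℝ (Fin n) → EuclideanSpace ℝ (Fin n))
    (hPm : Measurable P) (hPT : ∀ x ∈ Ω, P x ∈ T)
    (hPplan : ∀ h : EuclideanSpace ℝ (Fin n) → ℝ, Continuous h →
      ∫ x in Ω, h (P x) * I x = ∫ p in T, h p * L p)
    (hcost : (∫ x in Ω, ‖x - P x‖ ^ 2 * I x) = ∫ x in Ω, ‖x - Pt x‖ ^ 2 * I x) :
    ∀ᵐ x ∂(volume.restrict Ω), 0 < I x → P x = Pt x := by
  have h2β : (2 * β) ≠ 0 := by positivity
  have hΩm : MeasurableSet Ω := hΩc.isClosed.measurableSet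
  have haeΩ : ∀ᵐ x ∂(volume.restrict Ω), x ∈ Ω := ae_restrict_mem hΩm
  -- continuous extensions of z and w
  obtain ⟨Z, hZr⟩ := ContinuousMap.exists_restrict_eq hΩc.isClosed
    ⟨fun x : Ω => z x, continuousOn_iff_continuous_restrict.mp hzc⟩
  obtain ⟨W, hWr⟩ := ContinuousMap.exists_restrict_eq hTc.isClosed
    ⟨fun p : T => w p, continuousOn_iff_continuous_restrict.mp hwc⟩
  have hZeq : ∀ x ∈ Ω, Z x = z x := fun x hx =>
    congrFun (congrArg DFunLike.coe hZr) ⟨x, hx⟩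
  have hWeq : ∀ p ∈ T, W p = w p := fun p hp =>
    congrFun (congrArg DFunLike.coe hWr) ⟨p, hp⟩
  -- bounds
  obtain ⟨Cz, hCz⟩ := hΩc.exists_bound_of_continuousOn Z.continuous.continuousOn
  obtain ⟨Cw, hCw⟩ := hTc.exists_bound_of_continuousOn W.continuous.continuousOn
  obtain ⟨R0, hR0⟩ := hΩc.exists_bound_of_continuousOn continuousOn_id
  obtain ⟨R1, hR1⟩ := hTc.exists_bound_of_continuousOn continuousOn_id
  set R : ℝ := |R0| + |R1| with hR
  have hRΩ : ∀ x ∈ Ω, ‖x‖ ≤ R := fun x hx =>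
    le_trans (le_trans (hR0 x hx) (le_abs_self _)) (le_add_of_nonneg_right (abs_nonneg _))
  have hRT : ∀ p ∈ T, ‖p‖ ≤ R := fun p hp =>
    le_trans (le_trans (hR1 p hp) (le_abs_self _)) (le_add_of_nonneg_left (abs_nonneg _))
  have hRnn : (0:ℝ) ≤ R := by positivity
  have hIμ : Integrable I (volume.restrict Ω) := hIint
  -- integrability of the pieces
  have I1 : Integrable (fun x => Z x * I x) (volume.restrict Ω) :=
    hIμ.bdd_mul Z.continuous.measurable.aestronglyMeasurable
      (by filter_upwards [haeΩ] with x hx; exact hCz x hx)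
  have key : ∀ Q : EuclideanSpace ℝ (Fin n) → EuclideanSpace ℝ (Fin n),
      Measurable Q → (∀ x ∈ Ω, Q x ∈ T) →
      Integrable (fun x => W (Q x) * I x) (volume.restrict Ω) ∧
      Integrable (fun x => ‖x - Q x‖ ^ 2 * I x) (volume.restrict Ω) := by
    intro Q hQm hQT
    constructor
    · exact hIμ.bdd_mul (W.continuous.measurable.comp hQm).aestronglyMeasurable
        (by filter_upwards [haeΩ] with x hx; exact hCw _ (hQT x hx))
    · refine hIμ.bdd_mul ((measurable_id.sub hQm).norm.pow_const 2).aestronglyMeasurable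
        (c := (2 * R) ^ 2) ?_
      filter_upwards [haeΩ] with x hx
      have h1 : ‖x‖ ≤ R := hRΩ x hx
      have h2 : ‖Q x‖ ≤ R := hRT _ (hQT x hx)
      have h3 : ‖x - Q x‖ ≤ ‖x‖ + ‖Q x‖ := norm_sub_le _ _
      have h4 : (0:ℝ) ≤ ‖x - Q x‖ := norm_nonneg _
      rw [Real.norm_eq_abs, abs_of_nonneg (by positivity)]
      nlinarith
  obtain ⟨I2, I3⟩ := key P hPm hPT
  obtain ⟨I2t, I3t⟩ := key Pt hPtm hPtT
  -- algebraic identity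
  have hfact : ∀ a b c i : ℝ,
      a * i - b * i - β ^ 2 / (2 * β) * i + (2 * β)⁻¹ * (c * i)
        = (a - b - (β ^ 2 - c) / (2 * β)) * i := by
    intro a b c i; field_simp; ring
  -- the two comparison functions
  set g : EuclideanSpace ℝ (Fin n) → ℝ := fun x =>
    Z x * I x - W (P x) * I x - β ^ 2 / (2 * β) * I x
      + (2 * β)⁻¹ * (‖x - P x‖ ^ 2 * I x) with hg
  set gt : EuclideanSpace ℝ (Fin n) → ℝ := fun x =>
    Z x * I x - W (Pt x) * I x - β ^ 2 / (2 * β) * I x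
      + (2 * β)⁻¹ * (‖x - Pt x‖ ^ 2 * I x) with hgt
  have hgint : Integrable g (volume.restrict Ω) :=
    ((I1.sub I2).sub (hIμ.const_mul _)).add (I3.const_mul _)
  have hgtint : Integrable gt (volume.restrict Ω) :=
    ((I1.sub I2t).sub (hIμ.const_mul _)).add (I3t.const_mul _)
  -- equal integrals
  have hWint : ∫ x in Ω, W (P x) * I x = ∫ x in Ω, W (Pt x) * I x := by
    rw [hPplan W W.continuous, ← hPtplan W W.continuous]
  have hinteq : ∫ x, g x ∂(volume.restrict Ω) = ∫ x, gt x ∂(volume.restrict Ω) := by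
    have K1 : Integrable (fun x => Z x * I x - W (P x) * I x) (volume.restrict Ω) := I1.sub I2
    have K1t : Integrable (fun x => Z x * I x - W (Pt x) * I x) (volume.restrict Ω) := I1.sub I2t
    have K2 : Integrable (fun x => β ^ 2 / (2 * β) * I x) (volume.restrict Ω) := hIμ.const_mul _
    have J1 : Integrable (fun x => Z x * I x - W (P x) * I x - β ^ 2 / (2 * β) * I x)
        (volume.restrict Ω) := K1.sub K2
    have J1t : Integrable (fun x => Z x * I x - W (Pt x) * I x - β ^ 2 / (2 * β) * I x)
        (volume.restrict Ω) := K1t.sub K2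
    have J2 : Integrable (fun x => (2 * β)⁻¹ * (‖x - P x‖ ^ 2 * I x))
        (volume.restrict Ω) := I3.const_mul _
    have J2t : Integrable (fun x => (2 * β)⁻¹ * (‖x - Pt x‖ ^ 2 * I x))
        (volume.restrict Ω) := I3t.const_mul _
    simp only [hg, hgt]
    rw [integral_add J1 J2, integral_add J1t J2t,
      integral_sub K1 K2, integral_sub K1t K2,
      integral_sub I1 I2, integral_sub I1 I2t,
      hWint]
    simp only [integral_const_mul]
    rw [hcost]
  -- gt vanishes a.e.
  have hgt0 : gt =ᵐ[volume.restrict Ω] 0 := by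
    filter_upwards [heq, haeΩ] with x hx hxΩ
    simp only [hgt, Pi.zero_apply]
    rw [hfact, hZeq x hxΩ, hWeq _ (hPtT x hxΩ), hx, sub_self, zero_mul]
  have hgtzero : ∫ x, gt x ∂(volume.restrict Ω) = 0 :=
    (integral_congr_ae hgt0).trans (by simp)
  -- g nonnegative a.e.
  have hgnn : 0 ≤ᵐ[volume.restrict Ω] g := by
    filter_upwards [haeΩ] with x hx
    simp only [hg, Pi.zero_apply]
    rw [hfact, hZeq x hx, hWeq _ (hPT x hx)]
    exact mul_nonneg (sub_nonneg.2 (hadm x hx (P x) (hPT x hx))) (hI0 x hx)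
  have hg0 : g =ᵐ[volume.restrict Ω] 0 :=
    (integral_eq_zero_iff_of_nonneg_ae hgnn hgint).1 (hinteq.trans hgtzero)
  -- conclusion
  filter_upwards [hg0, huniq, haeΩ] with x hgx hux hxΩ hIx
  simp only [hg, Pi.zero_apply] at hgx
  rw [hfact, hZeq x hxΩ, hWeq _ (hPT x hxΩ)] at hgx
  rcases mul_eq_zero.1 hgx with h | h
  · exact hux (P x) (hPT x hxΩ) (by linarith)
  · exact absurd h (ne_of_gt hIx)
end

section
/- Let z : Ω → ℝ, T compact, and suppose for x ∈ Ω there is a unique p ∈ T with z(x) = (β² - |x-p|²)/(2β) + w(p) while z(x) > (β² - |x-q|²)/(2β) + w(q) for all q ∈ T with q ≠ p. Let z_ε, p_ε be as in the perturbation construction (w_ε = w + εχ, z_ε its type-A envelope, p_ε a maximizer for z_ε(x)). Then p_ε → p as ε → 0, and consequently the one-sided derivative d/dε|_{ε=0} z_ε(x) exists and equals χ(p). -/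
/-!
At `ε = 0` the envelope is attained only at `p`. By compactness, `f` stays a fixed amount below
`f p` outside any neighbourhood of `p`, a gap that a perturbation of size `O(ε)` cannot close; so
the maximizers `p_ε` converge to `p`. The envelope is then squeezed,
`z_0 + ε χ(p) ≤ z_ε ≤ z_0 + ε χ(p_ε)`, and `χ(p_ε) → χ(p)` gives the derivative (Danskin).
-/

open Filter Topology Set

theorem IsMaxOn.csSup_image_eq {α β : Type*} [ConditionallyCompleteLattice β] {f : α → β}
    {s : Set α} {a : α} (h : IsMaxOn f s a) (ha : a ∈ s) : sSup (f '' s) = f a :=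
  IsGreatest.csSup_eq ⟨mem_image_of_mem f ha, forall_mem_image.2 h⟩

variable {X : Type*} [TopologicalSpace X] {T : Set X} {f g : X → ℝ} {p : X}

theorem IsCompact.tendsto_nhds_of_tendsto_apply_of_unique_max {ι : Type*} {l : Filter ι}
    {u : ι → X} (hT : IsCompact T) (hf : ContinuousOn f T)
    (hmax : ∀ q ∈ T, q ≠ p → f q < f p) (hu : ∀ᶠ i in l, u i ∈ T)
    (hfu : Tendsto (f ∘ u) l (𝓝 (f p))) : Tendsto u l (𝓝 p) := by
  refine tendsto_nhds.2 fun V hVo hpV => ?_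
  rcases (T \ V).eq_empty_or_nonempty with hK | hK
  · filter_upwards [hu] with i hi using sdiff_eq_empty.1 hK hi
  obtain ⟨q, ⟨hqT, hqV⟩, hq⟩ := (hT.diff hVo).exists_isMaxOn hK (hf.mono sdiff_subset)
  have hfq : f q < f p := hmax q hqT fun h => hqV (h ▸ hpV)
  filter_upwards [hu, hfu.eventually (lt_mem_nhds hfq)] with i hi hfi
  by_contra hiV
  exact (hq ⟨hi, hiV⟩).not_gt hfi

theorem tendsto_of_isMaxOn_add_mul_of_unique_max {u : ℝ → X} (hT : IsCompact T) (hf : ContinuousOn f T)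
    (hg : ContinuousOn g T) (hp : p ∈ T) (hmax : ∀ q ∈ T, q ≠ p → f q < f p)
    (hu : ∀ᶠ ε in 𝓝 0, u ε ∈ T ∧ IsMaxOn (fun q => f q + ε * g q) T (u ε)) :
    Tendsto u (𝓝 0) (𝓝 p) := by
  obtain ⟨C, hC⟩ := hT.exists_bound_of_continuousOn hg
  refine hT.tendsto_nhds_of_tendsto_apply_of_unique_max hf hmax (hu.mono fun _ h => h.1) ?_
  -- `f (u ε)` is squeezed between `f p - 2 C |ε|` and `f p`.
  have hlower : Tendsto (fun ε : ℝ => f p - 2 * C * |ε|) (𝓝 0) (𝓝 (f p)) := by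
    have hcont : Continuous fun ε : ℝ => f p - 2 * C * |ε| := by fun_prop
    simpa using hcont.tendsto 0
  refine tendsto_of_tendsto_of_tendsto_of_le_of_le' hlower tendsto_const_nhds ?_ ?_
  · filter_upwards [hu] with ε ⟨hεT, hεmax⟩
    have h1 : f p + ε * g p ≤ f (u ε) + ε * g (u ε) := hεmax hp
    have h2 : |ε * g p| ≤ |ε| * C := by rw [abs_mul]; gcongr; simpa using hC p hp
    have h3 : |ε * g (u ε)| ≤ |ε| * C := by rw [abs_mul]; gcongr; simpa using hC _ hεT
    rw [Function.comp_apply]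
    linarith [abs_le.1 h2, abs_le.1 h3]
  · filter_upwards [hu] with ε hε
    rcases eq_or_ne (u ε) p with h | h
    · simp [h]
    · exact (hmax _ hε.1 h).le

theorem hasDerivAt_of_sandwich {F v : ℝ → ℝ} {c a : ℝ} (hv : Tendsto v (𝓝 a) (𝓝 c))
    (hF : ∀ᶠ ε in 𝓝 a, F a + (ε - a) * c ≤ F ε ∧ F ε ≤ F a + (ε - a) * v ε) :
    HasDerivAt F c a := by
  rw [hasDerivAt_iff_isLittleO]
  have hsmall : (fun ε => (v ε - c) * (ε - a)) =o[𝓝 a] fun ε => ε - a := by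
    simpa using ((Asymptotics.isLittleO_one_iff ℝ).2 (by simpa using hv.sub_const c)).mul_isBigO
      (Asymptotics.isBigO_refl (fun ε => ε - a) _)
  refine Asymptotics.IsBigO.trans_isLittleO (Asymptotics.IsBigO.of_bound 1 ?_) hsmall
  filter_upwards [hF] with ε ⟨hlow, hup⟩
  have hprod := le_abs_self ((v ε - c) * (ε - a))
  rw [one_mul, Real.norm_eq_abs, Real.norm_eq_abs, smul_eq_mul, abs_le]
  constructor <;> linarith [abs_nonneg ((v ε - c) * (ε - a))]

theorem hasDerivAt_sSup_image_add_mul {u : ℝ → X} (hT : IsCompact T) (hf : ContinuousOn f T)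
    (hg : ContinuousOn g T) (hp : p ∈ T) (hmax : ∀ q ∈ T, q ≠ p → f q < f p)
    (hu : ∀ᶠ ε in 𝓝 0, u ε ∈ T ∧ IsMaxOn (fun q => f q + ε * g q) T (u ε)) :
    HasDerivAt (fun ε => sSup ((fun q => f q + ε * g q) '' T)) (g p) 0 := by
  have hfp : ∀ q ∈ T, f q ≤ f p := fun q hq =>
    (eq_or_ne q p).elim (fun h => h ▸ le_rfl) fun h => (hmax q hq h).le
  have hF0 : sSup ((fun q => f q + 0 * g q) '' T) = f p := by
    simp only [zero_mul, add_zero]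
    exact IsMaxOn.csSup_image_eq hfp hp
  have hgu : Tendsto (g ∘ u) (𝓝 0) (𝓝 (g p)) :=
    (hg p hp).tendsto.comp (tendsto_nhdsWithin_iff.2
      ⟨tendsto_of_isMaxOn_add_mul_of_unique_max hT hf hg hp hmax hu, hu.mono fun _ h => h.1⟩)
  refine hasDerivAt_of_sandwich hgu ?_
  filter_upwards [hu] with ε ⟨huT, humax⟩
  rw [hF0, humax.csSup_image_eq huT, sub_zero, Function.comp_apply]
  exact ⟨humax hp, by linarith [hfp _ huT]⟩

theorem stmt_17_general {n : ℕ} (T : Set (EuclideanSpace ℝ (Fin n)))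
    (hTc : IsCompact T)
    (β : ℝ)
    (w χ : EuclideanSpace ℝ (Fin n) → ℝ)
    (hwc : ContinuousOn w T) (hχc : Continuous χ)
    (zf : ℝ → EuclideanSpace ℝ (Fin n) → ℝ)
    (hzf : ∀ ε y, zf ε y =
      sSup ((fun q => (β ^ 2 - ‖y - q‖ ^ 2) / (2 * β) + w q + ε * χ q) '' T))
    (x : EuclideanSpace ℝ (Fin n))
    (p : EuclideanSpace ℝ (Fin n)) (hp : p ∈ T)
    (hmax : zf 0 x = (β ^ 2 - ‖x - p‖ ^ 2) / (2 * β) + w p)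
    (huniq : ∀ q ∈ T, q ≠ p → zf 0 x > (β ^ 2 - ‖x - q‖ ^ 2) / (2 * β) + w q)
    (pf : ℝ → EuclideanSpace ℝ (Fin n))
    (hpf : ∀ ε ∈ Set.Ioo (-1 : ℝ) 1, pf ε ∈ T ∧
      zf ε x = (β ^ 2 - ‖x - pf ε‖ ^ 2) / (2 * β) + w (pf ε) + ε * χ (pf ε)) :
    Tendsto pf (𝓝[≠] (0 : ℝ)) (𝓝 p) ∧
      HasDerivAt (fun ε => zf ε x) (χ p) 0 := by
  set f := fun q => (β ^ 2 - ‖x - q‖ ^ 2) / (2 * β) + w q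
  have hfc : ContinuousOn f T := by
    refine ContinuousOn.add ?_ hwc
    fun_prop
  have hzf' : (fun ε => zf ε x) = fun ε => sSup ((fun q => f q + ε * χ q) '' T) :=
    funext fun ε => hzf ε x
  have hpmax : ∀ q ∈ T, q ≠ p → f q < f p := fun q hq hqp => by
    simpa only [hmax] using huniq q hq hqp
  have hpf_max : ∀ᶠ ε in 𝓝 0, pf ε ∈ T ∧ IsMaxOn (fun q => f q + ε * χ q) T (pf ε) := by
    filter_upwards [Ioo_mem_nhds (by norm_num : (-1 : ℝ) < 0) one_pos] with ε hε
    obtain ⟨hpfT, hpfε⟩ := hpf ε hε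
    refine ⟨hpfT, fun q hq => ?_⟩
    have hcont : ContinuousOn (fun q => f q + ε * χ q) T := hfc.add (by fun_prop)
    have hle : f q + ε * χ q ≤ zf ε x := hzf ε x ▸
      le_csSup (hTc.image_of_continuousOn hcont).bddAbove (mem_image_of_mem _ hq)
    exact hle.trans_eq hpfε
  exact ⟨(tendsto_of_isMaxOn_add_mul_of_unique_max hTc hfc hχc.continuousOn hp hpmax hpf_max).mono_left
      nhdsWithin_le_nhds,
    hzf' ▸ hasDerivAt_sSup_image_add_mul hTc hfc hχc.continuousOn hp hpmax hpf_max⟩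

theorem stmt_17 {n : ℕ} (Ω T : Set (EuclideanSpace ℝ (Fin n)))
    (hTc : IsCompact T) (hTne : T.Nonempty)
    (β : ℝ) (hβ : 0 < β)
    (w χ : EuclideanSpace ℝ (Fin n) → ℝ)
    (hwc : ContinuousOn w T) (hχc : Continuous χ)
    (hχ01 : ∀ q ∈ T, χ q ∈ Set.Icc (0 : ℝ) 1)
    (zf : ℝ → EuclideanSpace ℝ (Fin n) → ℝ)
    (hzf : ∀ ε y, zf ε y =
      sSup ((fun q => (β ^ 2 - ‖y - q‖ ^ 2) / (2 * β) + w q + ε * χ q) '' T))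
    (x : EuclideanSpace ℝ (Fin n)) (hx : x ∈ Ω)
    (p : EuclideanSpace ℝ (Fin n)) (hp : p ∈ T)
    (hmax : zf 0 x = (β ^ 2 - ‖x - p‖ ^ 2) / (2 * β) + w p)
    (huniq : ∀ q ∈ T, q ≠ p → zf 0 x > (β ^ 2 - ‖x - q‖ ^ 2) / (2 * β) + w q)
    (pf : ℝ → EuclideanSpace ℝ (Fin n))
    (hpf : ∀ ε ∈ Set.Ioo (-1 : ℝ) 1, pf ε ∈ T ∧
      zf ε x = (β ^ 2 - ‖x - pf ε‖ ^ 2) / (2 * β) + w (pf ε) + ε * χ (pf ε)) :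
    Tendsto pf (𝓝[≠] (0 : ℝ)) (𝓝 p) ∧
      HasDerivAt (fun ε => zf ε x) (χ p) 0 :=
  stmt_17_general T hTc β w χ hwc hχc zf hzf x p hp hmax huniq pf hpf
end
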